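/- Let α > 1, β ≥ 0, and let G be an infinite matrix over ℤ×ℤ with |G_{jk}| ≤ 3 c_v e^{-β|j-k|} / ((⟨j⟩+⟨k⟩) ⟨j-k⟩^α). Then for every n ≥ 2, the matrix power G^n satisfies |(G^n)_{jk}| ≤ (3c_v)^n c_α^{n-1} e^{-β|j-k|} / (⟨j⟩ ⟨k⟩ ⟨j-k⟩^α), where c_α is the constant from the convolution inequality ∑_{s∈ℤ} e^{-β|j-s|-β|s-k|}/(⟨j-s⟩^α ⟨s-k⟩^α) ≤ c_α e^{-β|j-k|}/⟨j-k⟩^α. -/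

import Mathlib

/-- ⟨k⟩ = |k| + 1 -/
noncomputable def br (k : ℤ) : ℝ := |(k : ℝ)| + 1

/-!
Write `w(d) = e^{-β|d|} / ⟨d⟩^α`, so that the hypothesis on `G` reads
`|G_{jk}| ≤ 3 c_v w(j-k) / (⟨j⟩ + ⟨k⟩)` and the convolution inequality reads `w * w ≤ c_α w`.
Every step `G^{n+1} = G^n G` costs one convolution of weights, and the factors `⟨j⟩, ⟨k⟩` are
recovered from `⟨j⟩⟨k⟩ ≤ (⟨j⟩ + ⟨s⟩)(⟨s⟩ + ⟨k⟩)` for `G^2` and `⟨j⟩⟨k⟩ ≤ ⟨j⟩⟨s⟩(⟨s⟩ + ⟨k⟩)`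
for the induction step, uniformly in the summation index `s`.
-/

noncomputable def decayWeight (α β : ℝ) (d : ℤ) : ℝ := Real.exp (-β * |(d : ℝ)|) / br d ^ α

lemma one_le_br (k : ℤ) : 1 ≤ br k := le_add_of_nonneg_left (abs_nonneg _)

lemma br_pos (k : ℤ) : 0 < br k := one_pos.trans_le (one_le_br k)

lemma summable_inv_br_rpow {α : ℝ} (hα : 1 < α) : Summable fun d : ℤ => (br d ^ α)⁻¹ := by
  have h := (Real.summable_one_div_nat_add_rpow 1 α).mpr hα
  refine .of_nat_of_neg (h.congr fun n => ?_) (h.congr fun n => ?_) <;>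
    simp [br, abs_of_nonneg (by positivity : (0 : ℝ) ≤ n + 1)]

lemma decayWeight_pos (α β : ℝ) (d : ℤ) : 0 < decayWeight α β d :=
  div_pos (Real.exp_pos _) (Real.rpow_pos_of_pos (br_pos d) α)

lemma mul_decayWeight_div (α β c x : ℝ) (d : ℤ) :
    c * decayWeight α β d / x = c * Real.exp (-β * |(d : ℝ)|) / (x * br d ^ α) := by
  rw [decayWeight]; ring

lemma decayWeight_mul_decayWeight (α β : ℝ) (d e : ℤ) :
    decayWeight α β d * decayWeight α β e =
      Real.exp (-β * |(d : ℝ)| - β * |(e : ℝ)|) / (br d ^ α * br e ^ α) := by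
  rw [decayWeight, decayWeight, div_mul_div_comm, ← Real.exp_add]; ring_nf

section DecayWeight

variable {α β : ℝ}

lemma decayWeight_le_inv_br_rpow (hβ : 0 ≤ β) (d : ℤ) : decayWeight α β d ≤ (br d ^ α)⁻¹ := by
  rw [decayWeight, div_eq_mul_inv]
  refine mul_le_of_le_one_left (inv_nonneg.mpr (Real.rpow_pos_of_pos (br_pos d) α).le) ?_
  exact Real.exp_le_one_iff.mpr (by nlinarith [abs_nonneg (d : ℝ)])

lemma decayWeight_le_one (hα : 0 ≤ α) (hβ : 0 ≤ β) (d : ℤ) : decayWeight α β d ≤ 1 :=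
  (decayWeight_le_inv_br_rpow hβ d).trans
    (inv_le_one_of_one_le₀ (Real.one_le_rpow (one_le_br d) hα))

lemma summable_decayWeight_mul (hα : 1 < α) (hβ : 0 ≤ β) (j k : ℤ) :
    Summable fun s => decayWeight α β (j - s) * decayWeight α β (s - k) := by
  refine ((summable_inv_br_rpow hα).comp_injective (sub_left_injective (b := k))).of_nonneg_of_le
    (fun s => (mul_pos (decayWeight_pos _ _ _) (decayWeight_pos _ _ _)).le) fun s => ?_
  calc decayWeight α β (j - s) * decayWeight α β (s - k)
      ≤ 1 * decayWeight α β (s - k) :=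
        mul_le_mul_of_nonneg_right (decayWeight_le_one (by linarith) hβ _)
          (decayWeight_pos _ _ _).le
    _ ≤ (br (s - k) ^ α)⁻¹ := (one_mul _).trans_le (decayWeight_le_inv_br_rpow hβ _)

end DecayWeight

section Convolution

variable {R : Type*} [SeminormedRing R] {w : ℤ → ℝ}

lemma norm_tsum_mul_le_of_convolution_bound (hw : ∀ d, 0 ≤ w d) {c : ℝ} {j k : ℤ}
    (hsum : Summable fun s => w (j - s) * w (s - k))
    (hconv : ∑' s, w (j - s) * w (s - k) ≤ c * w (j - k))
    {A B : ℤ → R} {a b M : ℝ} {D E : ℤ → ℝ} (ha : 0 ≤ a) (hb : 0 ≤ b) (hM : 0 < M)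
    (hDE : ∀ s, M ≤ D s * E s)
    (hA : ∀ s, ‖A s‖ ≤ a * w (j - s) / D s) (hB : ∀ s, ‖B s‖ ≤ b * w (s - k) / E s) :
    ‖∑' s, A s * B s‖ ≤ a * b * c * w (j - k) / M := by
  have hpoint : ∀ s, ‖A s * B s‖ ≤ a * b / M * (w (j - s) * w (s - k)) := fun s => calc
    ‖A s * B s‖ ≤ ‖A s‖ * ‖B s‖ := norm_mul_le _ _
    _ ≤ (a * w (j - s) / D s) * (b * w (s - k) / E s) :=
        mul_le_mul (hA s) (hB s) (norm_nonneg _) ((norm_nonneg _).trans (hA s))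
    _ = a * b * (w (j - s) * w (s - k)) / (D s * E s) := by ring
    _ ≤ a * b * (w (j - s) * w (s - k)) / M := by
        refine div_le_div_of_nonneg_left ?_ hM (hDE s)
        have := hw (j - s); have := hw (s - k); positivity
    _ = a * b / M * (w (j - s) * w (s - k)) := by ring
  calc ‖∑' s, A s * B s‖ ≤ a * b / M * ∑' s, w (j - s) * w (s - k) :=
        tsum_of_norm_bounded (hsum.hasSum.mul_left _) hpoint
    _ ≤ a * b / M * (c * w (j - k)) := mul_le_mul_of_nonneg_left hconv (by positivity)
    _ = a * b * c * w (j - k) / M := by ring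

theorem norm_iterate_le_of_convolution_bound (hw : ∀ d, 0 ≤ w d) {a c : ℝ} (ha : 0 ≤ a)
    (hc : 0 ≤ c) (hsum : ∀ j k, Summable fun s => w (j - s) * w (s - k))
    (hconv : ∀ j k, ∑' s, w (j - s) * w (s - k) ≤ c * w (j - k))
    {G : ℤ → ℤ → R} (hG : ∀ j k, ‖G j k‖ ≤ a * w (j - k) / (br j + br k))
    {P : ℕ → ℤ → ℤ → R} (hP1 : ∀ j k, P 1 j k = G j k)
    (hPsucc : ∀ n j k, P (n + 1) j k = ∑' s, P n j s * G s k) (m : ℕ) (j k : ℤ) :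
    ‖P (m + 2) j k‖ ≤ a ^ (m + 2) * c ^ (m + 1) * w (j - k) / (br j * br k) := by
  induction m generalizing k with
  | zero =>
    have hjk : 0 < br j * br k := mul_pos (br_pos j) (br_pos k)
    have hD : ∀ s, br j * br k ≤ (br j + br s) * (br s + br k) := fun s => by
      nlinarith [br_pos j, br_pos s, br_pos k]
    rw [hPsucc 1]
    simp_rw [hP1]
    convert norm_tsum_mul_le_of_convolution_bound hw (hsum j k) (hconv j k) ha ha hjk hD
      (hG j) (fun s => hG s k) using 1
    ring
  | succ m ih =>
    have hjk : 0 < br j * br k := mul_pos (br_pos j) (br_pos k)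
    have hD : ∀ s, br j * br k ≤ br j * br s * (br s + br k) := fun s => by
      nlinarith [mul_pos (br_pos j) (br_pos s), mul_pos (br_pos j) (br_pos k), one_le_br s]
    rw [hPsucc (m + 2)]
    convert norm_tsum_mul_le_of_convolution_bound hw (hsum j k) (hconv j k) (by positivity) ha
      hjk hD ih (fun s => hG s k) using 1
    ring

end Convolution

theorem Gn_bound_general (α β cv cα : ℝ) (hα : 1 < α) (hβ : 0 ≤ β)
    (G : ℤ → ℤ → ℂ)
    (hG : ∀ j k : ℤ, ‖G j k‖ ≤ 3 * cv * Real.exp (-β * |((j - k : ℤ) : ℝ)|) /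
      ((br j + br k) * br (j - k) ^ α))
    (hcα : ∀ j k : ℤ,
      ∑' s : ℤ, Real.exp (-β * |((j - s : ℤ) : ℝ)| - β * |((s - k : ℤ) : ℝ)|) /
          (br (j - s) ^ α * br (s - k) ^ α)
        ≤ cα * Real.exp (-β * |((j - k : ℤ) : ℝ)|) / br (j - k) ^ α)
    (P : ℕ → ℤ → ℤ → ℂ)
    (hP1 : ∀ j k, P 1 j k = G j k)
    (hPsucc : ∀ n j k, P (n + 1) j k = ∑' s : ℤ, P n j s * G s k) :
    ∀ n : ℕ, 2 ≤ n → ∀ j k : ℤ,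
      ‖P n j k‖ ≤ (3 * cv) ^ n * cα ^ (n - 1) * Real.exp (-β * |((j - k : ℤ) : ℝ)|) /
        (br j * br k * br (j - k) ^ α) := by
  have hG' : ∀ j k, ‖G j k‖ ≤ 3 * cv * decayWeight α β (j - k) / (br j + br k) := fun j k => by
    rw [mul_decayWeight_div]; exact hG j k
  have hconv : ∀ j k, ∑' s, decayWeight α β (j - s) * decayWeight α β (s - k) ≤
      cα * decayWeight α β (j - k) := fun j k => by
    simp_rw [decayWeight_mul_decayWeight]
    rw [decayWeight, ← mul_div_assoc]
    exact hcα j k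
  have h3cv : 0 ≤ 3 * cv := by
    have h := (norm_nonneg _).trans (hG' 0 0)
    rw [mul_div_assoc] at h
    exact nonneg_of_mul_nonneg_left h
      (div_pos (decayWeight_pos _ _ _) (add_pos (br_pos 0) (br_pos 0)))
  have hcα0 : 0 ≤ cα := nonneg_of_mul_nonneg_left
    ((tsum_nonneg fun s => (mul_pos (decayWeight_pos _ _ _) (decayWeight_pos _ _ _)).le).trans
      (hconv 0 0)) (decayWeight_pos _ _ _)
  intro n hn j k
  obtain ⟨m, rfl⟩ := Nat.exists_eq_add_of_le' hn
  rw [show m + 2 - 1 = m + 1 by omega, ← mul_decayWeight_div]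
  exact norm_iterate_le_of_convolution_bound (fun d => (decayWeight_pos α β d).le) h3cv hcα0
    (summable_decayWeight_mul hα hβ) hconv hG' hP1 hPsucc m j k

theorem Gn_bound (α β cv cα : ℝ) (hα : 1 < α) (hβ : 0 ≤ β) (hcv : 0 < cv)
    (G : ℤ → ℤ → ℂ)
    (hG : ∀ j k : ℤ, ‖G j k‖ ≤ 3 * cv * Real.exp (-β * |((j - k : ℤ) : ℝ)|) /
      ((br j + br k) * br (j - k) ^ α))
    (hcα : ∀ j k : ℤ,
      ∑' s : ℤ, Real.exp (-β * |((j - s : ℤ) : ℝ)| - β * |((s - k : ℤ) : ℝ)|) /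
          (br (j - s) ^ α * br (s - k) ^ α)
        ≤ cα * Real.exp (-β * |((j - k : ℤ) : ℝ)|) / br (j - k) ^ α)
    (P : ℕ → ℤ → ℤ → ℂ)
    (hP1 : ∀ j k, P 1 j k = G j k)
    (hPsucc : ∀ n j k, P (n + 1) j k = ∑' s : ℤ, P n j s * G s k) :
    ∀ n : ℕ, 2 ≤ n → ∀ j k : ℤ,
      ‖P n j k‖ ≤ (3 * cv) ^ n * cα ^ (n - 1) * Real.exp (-β * |((j - k : ℤ) : ℝ)|) /
        (br j * br k * br (j - k) ^ α) :=
  Gn_bound_general α β cv cα hα hβ G hG hcα P hP1 hPsucc
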